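/- arXiv:2308.12884 — 5 statements merged into one kernel-verified Lean document; each statement's English description precedes it below -/
import Mathlib

section
/- Let n : ℝ → ℝ³ be differentiable, F : ℝ³ → ℝ be differentiable, and suppose n'(t) = −(n(t) × ∇F(n(t))) × n(t) for all t. Then d/dt F(n(t)) = −|∇F(n(t)) × n(t)|² ≤ 0. -/
/-! The chain rule gives `d/dt F(n t) = ⟪∇F, n'⟫`, and for `n' = -(n × ∇F) × n` the triple product
identity `g · ((n × g) × n) = (n × g) · (n × g)` turns this into `-|∇F × n|²`. -/

open scoped RealInnerProductSpace

noncomputable def cross3 (a b : EuclideanSpace ℝ (Fin 3)) : EuclideanSpace ℝ (Fin 3) :=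
  WithLp.toLp 2 (crossProduct a b)

theorem HasGradientAt.hasDerivAt_comp {E : Type*} [NormedAddCommGroup E]
    [InnerProductSpace ℝ E] [CompleteSpace E] {F : E → ℝ} {g v : E} {n : ℝ → E} {t : ℝ}
    (hF : HasGradientAt F g (n t)) (hn : HasDerivAt n v t) :
    HasDerivAt (fun s => F (n s)) ⟪g, v⟫ t :=
  hF.hasFDerivAt.comp_hasDerivAt t hn

theorem inner_cross3_cross3 (n g : EuclideanSpace ℝ (Fin 3)) :
    ⟪g, cross3 (cross3 n g) n⟫ = ‖cross3 g n‖ ^ 2 := by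
  rw [← real_inner_self_eq_norm_sq]
  simp only [cross3, EuclideanSpace.inner_eq_star_dotProduct, star_trivial]
  rw [dotProduct_comm, triple_product_permutation, ← cross_anticomm n, neg_dotProduct_neg]

theorem rotational_flow_energy_dissipation
    (F : EuclideanSpace ℝ (Fin 3) → ℝ) (hF : Differentiable ℝ F)
    (n : ℝ → EuclideanSpace ℝ (Fin 3))
    (hder : ∀ t, HasDerivAt n (-(cross3 (cross3 (n t) (gradient F (n t))) (n t))) t) :
    ∀ t : ℝ, HasDerivAt (fun s => F (n s)) (-‖cross3 (gradient F (n t)) (n t)‖ ^ 2) t ∧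
      -‖cross3 (gradient F (n t)) (n t)‖ ^ 2 ≤ 0 := by
  intro t
  have hchain := (hF (n t)).hasGradientAt.hasDerivAt_comp (hder t)
  rw [inner_neg_right, inner_cross3_cross3] at hchain
  exact ⟨hchain, neg_nonpos.mpr (sq_nonneg _)⟩
end

section
/- Let n⁰, n¹, D be vectors in ℝ³ (or in a finite product of copies of ℝ³), τ > 0, and set m = (n⁰ + n¹)/2. If (n¹ − n⁰)/τ = −m × (D × m) (componentwise with the cross product in each ℝ³ factor), then |n¹ᵢ| = |n⁰ᵢ| for each component i. -/
/-! The increment `n¹ - n⁰` is a multiple of `m × (D × m)`, which is orthogonal to `m`. Hence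
`0 = ⟪n¹ - n⁰, n¹ + n⁰⟫ = |n¹|² - |n⁰|²`. -/

open scoped RealInnerProductSpace

lemma inner_cross3_self_left (a b : EuclideanSpace ℝ (Fin 3)) : ⟪cross3 a b, a⟫ = 0 := by
  rw [cross3, EuclideanSpace.inner_eq_star_dotProduct, star_trivial]
  exact dot_self_cross a b

lemma norm_eq_of_smul_sub_inner_midpoint_eq_zero {E : Type*} [NormedAddCommGroup E]
    [InnerProductSpace ℝ E] {x y v : E} {c : ℝ} (hc : c ≠ 0) (hv : c • (y - x) = v)
    (hmid : ⟪v, (2⁻¹ : ℝ) • (x + y)⟫ = 0) : ‖y‖ = ‖x‖ := by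
  rw [← hv, real_inner_smul_left, real_inner_smul_right, real_inner_comm, add_comm] at hmid
  have horth : ⟪y + x, y - x⟫ = 0 := by simpa [hc] using hmid
  exact (real_inner_add_sub_eq_zero_iff y x).mp horth

theorem discrete_rotational_update_length_preserving
    {k : ℕ} (n0 n1 D m : Fin k → EuclideanSpace ℝ (Fin 3)) (τ : ℝ) (hτ : 0 < τ)
    (hm : ∀ i, m i = (2⁻¹ : ℝ) • (n0 i + n1 i))
    (hupd : ∀ i, τ⁻¹ • (n1 i - n0 i) = -(cross3 (m i) (cross3 (D i) (m i)))) :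
    ∀ i, ‖n1 i‖ = ‖n0 i‖ := by
  intro i
  refine norm_eq_of_smul_sub_inner_midpoint_eq_zero (inv_ne_zero hτ.ne') (hupd i) ?_
  rw [← hm i, inner_neg_left, inner_cross3_self_left, neg_zero]
end

section
/- Let F : V → ℝ on a finite-dimensional inner product space V, let n⁰, n¹ ∈ V, τ > 0, m = (n⁰ + n¹)/2 ∈ (ℝ³)^k, and D ∈ (ℝ³)^k satisfy the discrete gradient relation ⟨D, n¹ − n⁰⟩ = F(n¹) − F(n⁰). If (n¹ − n⁰)/τ = −m × (D × m) (componentwise cross product), then F(n¹) − F(n⁰) = −τ ‖D × m‖² ≤ 0. -/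
open scoped RealInnerProductSpace

theorem inner_cross3_right (a b c : EuclideanSpace ℝ (Fin 3)) :
    ⟪a, cross3 b c⟫ = ⟪cross3 a b, c⟫ := by
  simp only [cross3, EuclideanSpace.inner_eq_star_dotProduct, star_trivial]
  rw [dotProduct_comm, triple_product_permutation, triple_product_permutation]

theorem inner_cross3_cross3_self (d m : EuclideanSpace ℝ (Fin 3)) :
    ⟪d, cross3 m (cross3 d m)⟫ = ‖cross3 d m‖ ^ 2 := by
  rw [inner_cross3_right, real_inner_self_eq_norm_sq]

theorem discrete_rotational_energy_dissipation_general
    {k : ℕ} (F : (Fin k → EuclideanSpace ℝ (Fin 3)) → ℝ)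
    (n0 n1 D m : Fin k → EuclideanSpace ℝ (Fin 3)) (τ : ℝ) (hτ : 0 < τ)
    (hDG : ∑ i, ⟪D i, n1 i - n0 i⟫ = F n1 - F n0)
    (hupd : ∀ i, τ⁻¹ • (n1 i - n0 i) = -(cross3 (m i) (cross3 (D i) (m i)))) :
    F n1 - F n0 = -τ * ∑ i, ‖cross3 (D i) (m i)‖ ^ 2 ∧ F n1 - F n0 ≤ 0 := by
  have hstep (i : Fin k) : n1 i - n0 i = -τ • cross3 (m i) (cross3 (D i) (m i)) := by
    rw [neg_smul, ← smul_neg, ← hupd i, smul_inv_smul₀ hτ.ne']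
  have henergy : F n1 - F n0 = -τ * ∑ i, ‖cross3 (D i) (m i)‖ ^ 2 := by
    simp only [← hDG, hstep, real_inner_smul_right, inner_cross3_cross3_self, Finset.mul_sum]
  refine ⟨henergy, henergy ▸ ?_⟩
  exact mul_nonpos_of_nonpos_of_nonneg (neg_nonpos.2 hτ.le)
    (Finset.sum_nonneg fun i _ => sq_nonneg _)

theorem discrete_rotational_energy_dissipation
    {k : ℕ} (F : (Fin k → EuclideanSpace ℝ (Fin 3)) → ℝ)
    (n0 n1 D m : Fin k → EuclideanSpace ℝ (Fin 3)) (τ : ℝ) (hτ : 0 < τ)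
    (hm : ∀ i, m i = (2⁻¹ : ℝ) • (n0 i + n1 i))
    (hDG : ∑ i, ⟪D i, n1 i - n0 i⟫ = F n1 - F n0)
    (hupd : ∀ i, τ⁻¹ • (n1 i - n0 i) = -(cross3 (m i) (cross3 (D i) (m i)))) :
    F n1 - F n0 = -τ * ∑ i, ‖cross3 (D i) (m i)‖ ^ 2 ∧ F n1 - F n0 ≤ 0 :=
  discrete_rotational_energy_dissipation_general F n0 n1 D m τ hτ hDG hupd
end

section
/- Let n : ℝ → ℝ³ be differentiable with |n(0)| = 1 and n'(t) = −(n(t) × g(t)) × n(t). Then n(t) × n'(t) = −n(t) × g(t) for all t. -/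
open scoped RealInnerProductSpace

/-! The velocity is orthogonal to `n`, so `|n|` is conserved; since `(n × n) · g = 0`, the vector
triple product expansion then collapses `n × ((n × g) × n)` to `|n|² (n × g) = n × g`. -/

open Matrix

theorem norm_eq_of_hasDerivAt_of_inner_eq_zero {E : Type*} [NormedAddCommGroup E]
    [InnerProductSpace ℝ E] {n v : ℝ → E} (hder : ∀ t, HasDerivAt n (v t) t)
    (horth : ∀ t, ⟪n t, v t⟫ = 0) (t s : ℝ) : ‖n t‖ = ‖n s‖ := by
  have hsq : ∀ t, HasDerivAt (‖n ·‖ ^ 2) 0 t := fun t => by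
    simpa [horth t] using (hder t).norm_sq
  have hconst : ‖n t‖ ^ 2 = ‖n s‖ ^ 2 :=
    is_const_of_deriv_eq_zero (fun t => (hsq t).differentiableAt) (fun t => (hsq t).deriv) t s
  exact (sq_eq_sq₀ (norm_nonneg _) (norm_nonneg _)).mp hconst

theorem inner_cross3_self (a b : EuclideanSpace ℝ (Fin 3)) : ⟪b, cross3 a b⟫ = 0 := by
  simp [cross3, EuclideanSpace.inner_eq_star_dotProduct, dotProduct_comm, dot_cross_self]

theorem cross3_neg_right (a b : EuclideanSpace ℝ (Fin 3)) : cross3 a (-b) = -cross3 a b := by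
  rw [cross3, cross3, WithLp.ofLp_neg, map_neg, WithLp.toLp_neg]

theorem cross3_cross3_cross3_self (a b : EuclideanSpace ℝ (Fin 3)) :
    cross3 a (cross3 (cross3 a b) a) = (‖a‖ ^ 2) • cross3 a b := by
  have hdot : a.ofLp ⬝ᵥ a.ofLp = ‖a‖ ^ 2 := by
    rw [← real_inner_self_eq_norm_sq, EuclideanSpace.inner_eq_star_dotProduct, star_trivial]
  simp only [cross3, WithLp.ofLp_toLp, cross_cross_eq_smul_sub_smul', dotProduct_comm _ a.ofLp,
    dot_self_cross, zero_smul, sub_zero, WithLp.toLp_smul]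
  rw [hdot]

theorem rotational_to_constrained
    (n g : ℝ → EuclideanSpace ℝ (Fin 3))
    (h0 : ‖n 0‖ = 1)
    (hder : ∀ t, HasDerivAt n (-(cross3 (cross3 (n t) (g t)) (n t))) t) :
    ∀ t, cross3 (n t) (deriv n t) = -(cross3 (n t) (g t)) := by
  intro t
  have horth : ∀ s, ⟪n s, -(cross3 (cross3 (n s) (g s)) (n s))⟫ = 0 := fun s => by
    rw [inner_neg_right, inner_cross3_self, neg_zero]
  have hunit : ‖n t‖ = 1 := h0 ▸ norm_eq_of_hasDerivAt_of_inner_eq_zero hder horth t 0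
  rw [(hder t).deriv, cross3_neg_right, cross3_cross3_cross3_self, hunit, one_pow, one_smul]
end

section
/- Let n⁰, n¹ ∈ (ℝ³)^k with |n⁰ᵢ| = 1 for all i, τ > 0, m = (n⁰+n¹)/2, and suppose (n¹ − n⁰)/τ = −mᵢ × (Dᵢ × mᵢ) componentwise for some D ∈ (ℝ³)^k. Then |n¹ᵢ| = 1 for all i, and moreover n¹ᵢ · n⁰ᵢ = 2|mᵢ|² − 1. -/
/-! Dotting the update with the midpoint `m i` kills the right-hand side, since `m × v ⟂ m`;
as `τ⁻¹ ≠ 0` this gives `⟪n¹ - n⁰, n⁰ + n¹⟫ = 0`, i.e. `‖n¹‖ = ‖n⁰‖ = 1`. The identity for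
`⟪n¹, n⁰⟫` is then the expansion of `‖(n⁰ + n¹)/2‖²` for two unit vectors. -/

open scoped RealInnerProductSpace

section InnerProductSpace

variable {F : Type*} [NormedAddCommGroup F] [InnerProductSpace ℝ F]

lemma norm_eq_of_inner_sub_midpoint_eq_zero {x y : F}
    (h : ⟪y - x, (2⁻¹ : ℝ) • (x + y)⟫ = 0) : ‖y‖ = ‖x‖ := by
  rw [real_inner_smul_right, mul_eq_zero, real_inner_comm] at h
  exact (real_inner_add_sub_eq_zero_iff y x).mp
    (by simpa [add_comm x y] using h.resolve_left (by norm_num))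

lemma inner_eq_two_mul_norm_midpoint_sq_sub_one {x y : F} (hx : ‖x‖ = 1) (hy : ‖y‖ = 1) :
    ⟪y, x⟫ = 2 * ‖(2⁻¹ : ℝ) • (x + y)‖ ^ 2 - 1 := by
  rw [norm_smul, mul_pow, norm_add_sq_real, hx, hy, real_inner_comm]
  norm_num
  ring

end InnerProductSpace

theorem discrete_rotational_unit_length_and_midpoint
    {k : ℕ} (n0 n1 D m : Fin k → EuclideanSpace ℝ (Fin 3)) (τ : ℝ) (hτ : 0 < τ)
    (hn0 : ∀ i, ‖n0 i‖ = 1)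
    (hm : ∀ i, m i = (2⁻¹ : ℝ) • (n0 i + n1 i))
    (hupd : ∀ i, τ⁻¹ • (n1 i - n0 i) = -(cross3 (m i) (cross3 (D i) (m i)))) :
    (∀ i, ‖n1 i‖ = 1) ∧ ∀ i, ⟪n1 i, n0 i⟫ = 2 * ‖m i‖ ^ 2 - 1 := by
  have hn1 : ∀ i, ‖n1 i‖ = 1 := fun i => by
    have h := congrArg (⟪·, m i⟫) (hupd i)
    simp only [real_inner_smul_left, inner_neg_left, inner_cross3_self_left, neg_zero,
      mul_eq_zero, inv_eq_zero, hτ.ne', false_or] at h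
    rw [hm i] at h
    rw [norm_eq_of_inner_sub_midpoint_eq_zero h, hn0 i]
  exact ⟨hn1, fun i => hm i ▸ inner_eq_two_mul_norm_midpoint_sq_sub_one (hn0 i) (hn1 i)⟩
end
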